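/- Let q be a positive natural number. Let E be a random real q×q matrix, defined on a probability space, whose q² entries form an independent family of real random variables each distributed as a standard Gaussian N(0,1). For t ∈ ℝ let D(t) be a deterministic real q×q diagonal matrix whose minimal diagonal entry tends to +∞ as t → ∞. Then for every ε > 0, the probability of the event {D(t) + E is invertible and ‖(D(t) + E)^{-1}‖ ≤ ε} tends to 1 as t → ∞; equivalently, lim_{t→∞} P(D(t) + E is not invertible, or ‖(D(t) + E)^{-1}‖ > ε) = 0. -/

import Mathlib

/-!
For a fixed matrix `A`, factor `D + A = D (1 + D⁻¹ A)`. Since `D(t)⁻¹ → 0`, the factor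
`1 + D(t)⁻¹ A` tends to `1`, so it is eventually invertible with inverse tending to `1`, and
`(D(t) + A)⁻¹ = (1 + D(t)⁻¹ A)⁻¹ D(t)⁻¹ → 0`. Hence for every outcome `ω` the event eventually
holds, and its probability tends to `1` by dominated convergence.
-/

open Matrix Filter MeasureTheory ProbabilityTheory

attribute [local instance] Matrix.normedAddCommGroup

open Topology

section Measurability

variable {Ω : Type*} [MeasurableSpace Ω] {m n : Type*}

theorem Continuous.measurable_comp_of_measurable_entries [Countable m] [Countable n]
    {α β : Type*} [TopologicalSpace α] [MeasurableSpace α] [BorelSpace α]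
    [SecondCountableTopology α] [TopologicalSpace β] [MeasurableSpace β] [BorelSpace β]
    {f : Matrix m n α → β} (hf : Continuous f) {M : Ω → Matrix m n α}
    (hM : ∀ i j, Measurable fun ω => M ω i j) : Measurable fun ω => f (M ω) :=
  -- `Matrix m n α` carries no measurable structure; work on the underlying Pi type.
  (show Continuous fun X : m → n → α => f X from hf).measurable.comp
    (measurable_pi_lambda _ fun i => measurable_pi_lambda _ fun j => hM i j)

variable [Fintype n] [DecidableEq n] {M : Ω → Matrix n n ℝ}

theorem measurable_inv_entry (hM : ∀ i j, Measurable fun ω => M ω i j) (i j : n) :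
    Measurable fun ω => (M ω)⁻¹ i j := by
  simp only [inv_def, Matrix.smul_apply, smul_eq_mul, Ring.inverse_eq_inv']
  exact (continuous_id.matrix_det.measurable_comp_of_measurable_entries hM).inv.mul
    ((continuous_id.matrix_adjugate.matrix_elem i j).measurable_comp_of_measurable_entries hM)

theorem measurableSet_isUnit_and_norm_inv_le (hM : ∀ i j, Measurable fun ω => M ω i j) (ε : ℝ) :
    MeasurableSet {ω | IsUnit (M ω) ∧ ‖(M ω)⁻¹‖ ≤ ε} := by
  simp only [isUnit_iff_isUnit_det, isUnit_iff_ne_zero, Set.ofPred_and]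
  exact (measurableSet_singleton 0).compl.preimage
      (continuous_id.matrix_det.measurable_comp_of_measurable_entries hM) |>.inter <|
    measurableSet_le
      (continuous_norm.measurable_comp_of_measurable_entries (measurable_inv_entry hM))
      measurable_const

end Measurability

section Asymptotics

variable {ι n K : Type*} [Fintype n] [DecidableEq n] [Field K] [TopologicalSpace K]
  [IsTopologicalRing K] [ContinuousInv₀ K] [T1Space K] {l : Filter ι} {D : ι → Matrix n n K}

theorem eventually_isUnit_add_and_tendsto_inv_add (hunit : ∀ᶠ t in l, IsUnit (D t))
    (hD : Tendsto (fun t => (D t)⁻¹) l (𝓝 0)) (A : Matrix n n K) :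
    (∀ᶠ t in l, IsUnit (D t + A)) ∧ Tendsto (fun t => (D t + A)⁻¹) l (𝓝 0) := by
  have hcont : Continuous fun X : Matrix n n K => 1 + X * A := by fun_prop
  have hone : Tendsto (fun t => 1 + (D t)⁻¹ * A) l (𝓝 1) := by
    simpa [Function.comp_def] using (hcont.tendsto 0).comp hD
  have hinv : ContinuousAt Inv.inv (1 : Matrix n n K) := by
    refine continuousAt_matrix_inv _ ?_
    rw [det_one, Ring.inverse_eq_inv']
    exact continuousAt_inv₀ one_ne_zero
  have hfactor : ∀ᶠ t in l, D t + A = D t * (1 + (D t)⁻¹ * A) := by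
    filter_upwards [hunit] with t ht
    rw [mul_add, mul_one, ← mul_assoc, mul_nonsing_inv _ ((isUnit_iff_isUnit_det _).1 ht), one_mul]
  have hdet : ∀ᶠ t in l, IsUnit (1 + (D t)⁻¹ * A) := by
    have hdet_one := (continuous_id.matrix_det.tendsto 1).comp hone
    simp only [Function.comp_def, id, det_one] at hdet_one
    filter_upwards [hdet_one.eventually_ne one_ne_zero] with t ht
    exact (isUnit_iff_isUnit_det _).2 (isUnit_iff_ne_zero.2 ht)
  refine ⟨?_, ?_⟩
  · filter_upwards [hunit, hdet, hfactor] with t hDt hfactor_unit hfactor_eq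
    rw [hfactor_eq]; exact hDt.mul hfactor_unit
  · have hlim := (hinv.tendsto.comp hone).mul hD
    rw [inv_one, one_mul] at hlim
    refine hlim.congr' ?_
    filter_upwards [hfactor] with t ht
    rw [ht, Matrix.mul_inv_rev, Function.comp_apply]

end Asymptotics

theorem eventually_isUnit_diagonal_and_tendsto_inv {ι n : Type*} [Fintype n] [DecidableEq n]
    {l : Filter ι} {d : ι → n → ℝ} (hd : ∀ j, Tendsto (fun t => d t j) l atTop) :
    (∀ᶠ t in l, IsUnit (diagonal (d t))) ∧ Tendsto (fun t => (diagonal (d t))⁻¹) l (𝓝 0) := by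
  have hpos : ∀ᶠ t in l, ∀ j, d t j ≠ 0 :=
    eventually_all.2 fun j => ((hd j).eventually_gt_atTop 0).mono fun _ h => h.ne'
  have hinv : Tendsto (fun t => diagonal fun j => (d t j)⁻¹) l (𝓝 0) := by
    simpa [Function.comp_def] using (continuous_id.matrix_diagonal.tendsto _).comp
      (tendsto_pi_nhds.2 fun j => tendsto_inv_atTop_zero.comp (hd j))
  refine ⟨hpos.mono fun t ht => ?_, hinv.congr' (hpos.mono fun t ht => ?_)⟩
  · simpa [Pi.isUnit_iff] using ht
  · refine (inv_eq_right_inv ?_).symm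
    simp [diagonal_mul_diagonal, ht]

theorem stmt_4_general {Ω : Type*} [MeasureSpace Ω] [IsProbabilityMeasure (ℙ : Measure Ω)]
    (q : ℕ) (E : Ω → Matrix (Fin q) (Fin q) ℝ)
    (hmeas : ∀ i j, Measurable fun ω => E ω i j)
    (d : ℝ → Fin q → ℝ)
    (hd : Tendsto (fun t => ⨅ j, d t j) atTop atTop)
    (ε : ℝ) (hε : 0 < ε) :
    Tendsto (fun t => ℙ {ω | IsUnit (Matrix.diagonal (d t) + E ω) ∧
        ‖(Matrix.diagonal (d t) + E ω)⁻¹‖ ≤ ε}) atTop (nhds 1) := by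
  obtain ⟨hdiag_unit, hdiag_inv⟩ := eventually_isUnit_diagonal_and_tendsto_inv fun j =>
    tendsto_atTop_mono (fun t => ciInf_le (Set.finite_range (d t)).bddBelow j) hd
  have hevent : ∀ ω, ∀ᶠ t in atTop,
      IsUnit (diagonal (d t) + E ω) ∧ ‖(diagonal (d t) + E ω)⁻¹‖ ≤ ε := fun ω => by
    obtain ⟨hunit, hinv⟩ := eventually_isUnit_add_and_tendsto_inv_add hdiag_unit hdiag_inv (E ω)
    exact hunit.and <| (tendsto_zero_iff_norm_tendsto_zero.1 hinv).eventually_le_const hε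
  have hmeas_add : ∀ t i j, Measurable fun ω => (diagonal (d t) + E ω) i j :=
    fun t i j => (hmeas i j).const_add _
  simpa using tendsto_measure_of_ae_tendsto_indicator_of_isFiniteMeasure (μ := ℙ) atTop
    MeasurableSet.univ (fun t => measurableSet_isUnit_and_norm_inv_le (hmeas_add t) ε)
    (ae_of_all _ fun ω => (hevent ω).mono fun t ht => by simpa using ht)

/-- with `E` a random `q × q` matrix with i.i.d. standard Gaussian entries and
`D(t)` deterministic diagonal matrices whose minimal diagonal entry tends to `+∞`, for every
`ε > 0` the probability that `D(t) + E` is invertible with `‖(D(t) + E)⁻¹‖ ≤ ε` tends to `1`. -/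
theorem stmt_4 {Ω : Type*} [MeasureSpace Ω] [IsProbabilityMeasure (ℙ : Measure Ω)]
    (q : ℕ) (hq : 0 < q) (E : Ω → Matrix (Fin q) (Fin q) ℝ)
    (hmeas : ∀ i j, Measurable fun ω => E ω i j)
    (hindep : iIndepFun
      (fun (ij : Fin q × Fin q) ω => E ω ij.1 ij.2) ℙ)
    (hlaw : ∀ i j, Measure.map (fun ω => E ω i j) ℙ = gaussianReal 0 1)
    (d : ℝ → Fin q → ℝ)
    (hd : Tendsto (fun t => ⨅ j, d t j) atTop atTop)
    (ε : ℝ) (hε : 0 < ε) :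
    Tendsto (fun t => ℙ {ω | IsUnit (Matrix.diagonal (d t) + E ω) ∧
        ‖(Matrix.diagonal (d t) + E ω)⁻¹‖ ≤ ε}) atTop (nhds 1) :=
  stmt_4_general q E hmeas d hd ε hε
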